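/- arXiv:1510.03965 — 4 statements merged into one kernel-verified Lean document; each statement's English description precedes it below -/
import Mathlib

section
/- Let N ≥ 3, let ν ≠ 0 be a real number, and let Y : ℝ^N → ℝ be a Schwartz function satisfying −ΔY(x) − ((N+2)/(N−2))W(x)^{4/(N−2)} Y(x) = −ν² Y(x) for all x ∈ ℝ^N. Then Y is orthogonal to the scaling mode: ∫_{ℝ^N} Y(x) · ΛW(x) dx = 0, where ΛW(x) = ((N−2)/2)W(x) + x·∇W(x). -/
open MeasureTheory Real

noncomputable def groundW (N : ℕ) (x : EuclideanSpace ℝ (Fin N)) : ℝ :=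
  (1 + ‖x‖ ^ 2 / ((N : ℝ) * ((N : ℝ) - 2))) ^ (-(((N : ℝ) - 2) / 2))

/-- The Euclidean Laplacian, written as a sum of second partial derivatives. -/
noncomputable def lap {N : ℕ} (g : EuclideanSpace ℝ (Fin N) → ℝ)
    (x : EuclideanSpace ℝ (Fin N)) : ℝ :=
  ∑ i : Fin N,
    fderiv ℝ (fun y => fderiv ℝ g y (EuclideanSpace.single i 1)) x (EuclideanSpace.single i 1)

/-- The generator of scaling `ΛW(x) = ((N-2)/2) W(x) + x·∇W(x)`. -/
noncomputable def LamW (N : ℕ) (x : EuclideanSpace ℝ (Fin N)) : ℝ :=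
  ((N : ℝ) - 2) / 2 * groundW N x + fderiv ℝ (groundW N) x x

/-!
`ΛW` is the derivative at `λ = 1` of the family of solutions `λ^{(N-2)/2} W(λx)` of
`-Δu = f(u)`, so it lies in the kernel of `L = -Δ - f'(W)`; here this is checked directly on the
radial profile: with `t = 1 + |x|²/(N(N-2))` and `p = (N-2)/2` one has `ΛW = p(2 - t)t^{-p-1}`.
Since `ΛW` has temperate growth, two integrations by parts against the Schwartz function `Y`
make `L` symmetric, whence `-ν² ∫ Y ΛW = ∫ (LY) ΛW = ∫ Y (LΛW) = 0`.
-/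
open scoped SchwartzMap

namespace Function.HasTemperateGrowth

variable {E F : Type*} [NormedAddCommGroup E] [NormedSpace ℝ E]
  [NormedAddCommGroup F] [NormedSpace ℝ F] {f : E → F}

theorem fderiv (hf : f.HasTemperateGrowth) : (fderiv ℝ f).HasTemperateGrowth := by
  refine ⟨hf.1.fderiv_right le_rfl, fun n => ?_⟩
  obtain ⟨k, C, h⟩ := hf.2 (n + 1)
  exact ⟨k, C, fun x => norm_iteratedFDeriv_fderiv.trans_le (h x)⟩

theorem fderiv_apply (hf : f.HasTemperateGrowth) (v : E) :
    (fun x => _root_.fderiv ℝ f x v).HasTemperateGrowth :=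
  (ContinuousLinearMap.apply ℝ F v).hasTemperateGrowth.comp hf.fderiv

theorem lap {N : ℕ} {f : EuclideanSpace ℝ (Fin N) → ℝ} (hf : f.HasTemperateGrowth) :
    (_root_.lap f).HasTemperateGrowth := by
  unfold _root_.lap
  exact .sum fun i _ => (hf.fderiv_apply _).fderiv_apply _

end Function.HasTemperateGrowth

namespace SchwartzMap

variable {D : Type*} [NormedAddCommGroup D] [NormedSpace ℝ D] [FiniteDimensional ℝ D]
  [MeasurableSpace D] [BorelSpace D] {μ : Measure D} [μ.IsAddHaarMeasure]

theorem integrable_mul_of_hasTemperateGrowth (Y : 𝓢(D, ℝ)) {Z : D → ℝ}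
    (hZ : Z.HasTemperateGrowth) : Integrable (fun x => Y x * Z x) μ :=
  (bilinLeftCLM (ContinuousLinearMap.mul ℝ ℝ) hZ Y).integrable

theorem integral_mul_fderiv_eq_neg_of_hasTemperateGrowth (Y : 𝓢(D, ℝ)) {Z : D → ℝ}
    (hZ : Z.HasTemperateGrowth) (v : D) :
    ∫ x, Y x * fderiv ℝ Z x v ∂μ = -∫ x, fderiv ℝ Y x v * Z x ∂μ :=
  integral_mul_fderiv_eq_neg_fderiv_mul_of_integrable
    ((LineDeriv.lineDerivOp v Y).integrable_mul_of_hasTemperateGrowth hZ)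
    (Y.integrable_mul_of_hasTemperateGrowth (hZ.fderiv_apply v))
    (Y.integrable_mul_of_hasTemperateGrowth hZ)
    (fun x _ => Y.differentiableAt) (fun x _ => hZ.1.differentiable (by simp) x)

theorem integral_mul_fderiv_fderiv_eq_of_hasTemperateGrowth (Y : 𝓢(D, ℝ)) {Z : D → ℝ}
    (hZ : Z.HasTemperateGrowth) (v : D) :
    ∫ x, Y x * fderiv ℝ (fun y => fderiv ℝ Z y v) x v ∂μ =
      ∫ x, fderiv ℝ (fun y => fderiv ℝ Y y v) x v * Z x ∂μ := by
  rw [Y.integral_mul_fderiv_eq_neg_of_hasTemperateGrowth (hZ.fderiv_apply v), neg_eq_iff_eq_neg]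
  exact (LineDeriv.lineDerivOp v Y).integral_mul_fderiv_eq_neg_of_hasTemperateGrowth hZ v

theorem integral_mul_lap_eq_of_hasTemperateGrowth {N : ℕ}
    (Y : 𝓢(EuclideanSpace ℝ (Fin N), ℝ)) {Z : EuclideanSpace ℝ (Fin N) → ℝ}
    (hZ : Z.HasTemperateGrowth) : ∫ x, Y x * lap Z x = ∫ x, lap Y x * Z x := by
  have hY₂ (v : EuclideanSpace ℝ (Fin N)) :
      Integrable fun x => fderiv ℝ (fun y => fderiv ℝ Y y v) x v * Z x :=
    (LineDeriv.lineDerivOp v (LineDeriv.lineDerivOp v Y)).integrable_mul_of_hasTemperateGrowth hZ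
  simp only [lap, Finset.mul_sum, Finset.sum_mul]
  rw [integral_finsetSum _ fun i _ =>
      Y.integrable_mul_of_hasTemperateGrowth ((hZ.fderiv_apply _).fderiv_apply _),
    integral_finsetSum _ fun i _ => hY₂ _]
  exact Finset.sum_congr rfl fun i _ => Y.integral_mul_fderiv_fderiv_eq_of_hasTemperateGrowth hZ _

end SchwartzMap

section Radial

variable {E : Type*} [NormedAddCommGroup E] [InnerProductSpace ℝ E]

theorem hasFDerivAt_comp_norm_sq {g : ℝ → ℝ} {g' : ℝ} {x : E}
    (hg : HasDerivAt g g' (‖x‖ ^ 2)) :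
    HasFDerivAt (fun y => g (‖y‖ ^ 2)) ((2 * g') • innerSL ℝ x) x := by
  refine (hg.comp_hasFDerivAt x (hasStrictFDerivAt_norm_sq x).hasFDerivAt).congr_fderiv ?_
  ext v
  simp
  ring

theorem fderiv_comp_norm_sq_apply {g : ℝ → ℝ} {g' : ℝ} {x : E}
    (hg : HasDerivAt g g' (‖x‖ ^ 2)) (v : E) :
    fderiv ℝ (fun y => g (‖y‖ ^ 2)) x v = 2 * g' * inner ℝ v x := by
  simp [(hasFDerivAt_comp_norm_sq hg).fderiv, real_inner_comm]

theorem fderiv_fderiv_comp_norm_sq_apply {g g' : ℝ → ℝ} {g'' : ℝ}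
    (hg : ∀ s, 0 ≤ s → HasDerivAt g (g' s) s) {x : E} (hg' : HasDerivAt g' g'' (‖x‖ ^ 2))
    (v : E) :
    fderiv ℝ (fun y => fderiv ℝ (fun z => g (‖z‖ ^ 2)) y v) x v =
      4 * g'' * inner ℝ v x ^ 2 + 2 * g' (‖x‖ ^ 2) * ‖v‖ ^ 2 := by
  have hfun : (fun y => fderiv ℝ (fun z => g (‖z‖ ^ 2)) y v) =
      fun y => 2 * g' (‖y‖ ^ 2) * innerSL ℝ v y :=
    funext fun y => fderiv_comp_norm_sq_apply (hg (‖y‖ ^ 2) (by positivity)) v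
  have hderiv := (hasFDerivAt_comp_norm_sq (hg'.const_mul 2)).fun_mul (innerSL ℝ v).hasFDerivAt
  rw [hfun, hderiv.fderiv]
  simp [real_inner_comm x v]
  ring

end Radial

theorem lap_comp_norm_sq {N : ℕ} {g g' g'' : ℝ → ℝ} (hg : ∀ s, 0 ≤ s → HasDerivAt g (g' s) s)
    (hg' : ∀ s, 0 ≤ s → HasDerivAt g' (g'' s) s) (x : EuclideanSpace ℝ (Fin N)) :
    lap (fun y => g (‖y‖ ^ 2)) x = 4 * ‖x‖ ^ 2 * g'' (‖x‖ ^ 2) + 2 * N * g' (‖x‖ ^ 2) := by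
  simp only [lap, fderiv_fderiv_comp_norm_sq_apply hg (hg' _ (by positivity)),
    EuclideanSpace.inner_single_left, PiLp.norm_single, Finset.sum_add_distrib]
  simp only [starRingEnd_apply, star_one, one_mul, norm_one, one_pow, mul_one]
  rw [← Finset.mul_sum, ← EuclideanSpace.real_norm_sq_eq, Finset.sum_const, Finset.card_univ,
    Fintype.card_fin, nsmul_eq_mul]
  ring

noncomputable def bubbleBase (c s : ℝ) : ℝ := 1 + s / c

noncomputable def scalingProfile (p c s : ℝ) : ℝ :=
  p * (2 - bubbleBase c s) * bubbleBase c s ^ (-p - 1)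

noncomputable def scalingProfileDeriv (p c s : ℝ) : ℝ :=
  p / c * (p * bubbleBase c s ^ (-p - 1) - 2 * (p + 1) * bubbleBase c s ^ (-p - 2))

noncomputable def scalingProfileDeriv2 (p c s : ℝ) : ℝ :=
  p * (p + 1) / c ^ 2 * (2 * (p + 2) * bubbleBase c s ^ (-p - 3) - p * bubbleBase c s ^ (-p - 2))

theorem hasDerivAt_bubbleBase (c s : ℝ) : HasDerivAt (bubbleBase c) (1 / c) s :=
  ((hasDerivAt_id' s).div_const c).const_add 1

section Profile

variable {p c s : ℝ}

theorem bubbleBase_pos (hc : 0 < c) (hs : 0 ≤ s) : 0 < bubbleBase c s :=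
  add_pos_of_pos_of_nonneg one_pos (div_nonneg hs hc.le)

theorem hasDerivAt_bubbleBase_rpow (hc : 0 < c) (r : ℝ) (hs : 0 ≤ s) :
    HasDerivAt (fun s => bubbleBase c s ^ r) (r / c * bubbleBase c s ^ (r - 1)) s := by
  convert (hasDerivAt_bubbleBase c s).rpow_const (p := r) (Or.inl (bubbleBase_pos hc hs).ne')
    using 1
  ring

theorem hasDerivAt_scalingProfile (hc : 0 < c) (hs : 0 ≤ s) :
    HasDerivAt (scalingProfile p c) (scalingProfileDeriv p c s) s := by
  refine ((((hasDerivAt_bubbleBase c s).const_sub 2).const_mul p).mul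
    (hasDerivAt_bubbleBase_rpow hc (-p - 1) hs)).congr_deriv ?_
  have hstep : bubbleBase c s ^ (-p - 1) = bubbleBase c s ^ (-p - 2) * bubbleBase c s := by
    rw [← rpow_add_one (bubbleBase_pos hc hs).ne']
    ring_nf
  rw [scalingProfileDeriv, show -p - 1 - 1 = -p - 2 by ring, hstep]
  ring

theorem hasDerivAt_scalingProfileDeriv (hc : 0 < c) (hs : 0 ≤ s) :
    HasDerivAt (scalingProfileDeriv p c) (scalingProfileDeriv2 p c s) s := by
  refine ((((hasDerivAt_bubbleBase_rpow hc (-p - 1) hs).const_mul p).sub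
    ((hasDerivAt_bubbleBase_rpow hc (-p - 2) hs).const_mul (2 * (p + 1)))).const_mul
    (p / c)).congr_deriv ?_
  rw [scalingProfileDeriv2, show -p - 1 - 1 = -p - 2 by ring, show -p - 2 - 1 = -p - 3 by ring]
  ring

theorem mul_rpow_add_two_mul_deriv_eq_scalingProfile (hc : 0 < c) (hs : 0 ≤ s) :
    p * bubbleBase c s ^ (-p) + 2 * (-p / c * bubbleBase c s ^ (-p - 1)) * s =
      scalingProfile p c s := by
  have ht := bubbleBase_pos hc hs
  have hs_eq : s = c * (bubbleBase c s - 1) := by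
    rw [bubbleBase]; field_simp; ring
  have hstep : bubbleBase c s ^ (-p) = bubbleBase c s ^ (-p - 1) * bubbleBase c s := by
    rw [← rpow_add_one ht.ne']; ring_nf
  rw [scalingProfile, hstep]
  generalize bubbleBase c s ^ (-p - 1) = u
  generalize bubbleBase c s = t at hs_eq
  subst hs_eq
  field_simp
  ring

theorem scalingProfile_ode (hp : 0 < p) (hc : c = 4 * p * (p + 1)) (hs : 0 ≤ s) :
    4 * s * scalingProfileDeriv2 p c s + 2 * (2 * p + 2) * scalingProfileDeriv p c s
      + (p + 2) / p * (bubbleBase c s ^ 2)⁻¹ * scalingProfile p c s = 0 := by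
  have hc0 : 0 < c := by rw [hc]; positivity
  have ht := bubbleBase_pos hc0 hs
  have hs_eq : s = c * (bubbleBase c s - 1) := by
    rw [bubbleBase]; field_simp; ring
  have h2 : bubbleBase c s ^ (-p - 2) = bubbleBase c s ^ (-p - 3) * bubbleBase c s := by
    rw [← rpow_add_one ht.ne']; ring_nf
  have h1 : bubbleBase c s ^ (-p - 1) = bubbleBase c s ^ (-p - 3) * bubbleBase c s ^ 2 := by
    rw [← rpow_natCast, ← rpow_add ht]; ring_nf
  rw [scalingProfileDeriv2, scalingProfileDeriv, scalingProfile, h1, h2]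
  generalize bubbleBase c s ^ (-p - 3) = u
  generalize bubbleBase c s = t at ht hs_eq ⊢
  subst hs_eq hc
  field_simp
  ring

end Profile

theorem hasTemperateGrowth_bubbleBase_rpow {H : Type*} [NormedAddCommGroup H]
    [InnerProductSpace ℝ H] {c : ℝ} (hc : 0 < c) (r : ℝ) :
    (fun x : H => bubbleBase c (‖x‖ ^ 2) ^ r).HasTemperateGrowth := by
  have hscale : (fun x : H => bubbleBase c (‖x‖ ^ 2) ^ r) =
      (fun y : H => (1 + ‖y‖ ^ 2) ^ r) ∘ ((√c)⁻¹ • ContinuousLinearMap.id ℝ H) := by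
    funext x
    simp [bubbleBase, norm_smul, mul_pow, sq_sqrt hc.le, div_eq_inv_mul]
  rw [hscale]
  exact (Function.hasTemperateGrowth_one_add_norm_sq_rpow H r).comp
    ((√c)⁻¹ • ContinuousLinearMap.id ℝ H).hasTemperateGrowth

section GroundState

variable {N : ℕ}

theorem mul_sub_two_pos (hN : 3 ≤ N) : 0 < (N : ℝ) * ((N : ℝ) - 2) := by
  have hN' : (3 : ℝ) ≤ N := by exact_mod_cast hN
  nlinarith

theorem groundW_eq_bubbleBase_rpow :
    groundW N = fun x => bubbleBase ((N : ℝ) * ((N : ℝ) - 2)) (‖x‖ ^ 2) ^ (-(((N : ℝ) - 2) / 2)) :=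
  rfl

theorem LamW_eq_scalingProfile (hN : 3 ≤ N) :
    LamW N = fun x => scalingProfile (((N : ℝ) - 2) / 2) ((N : ℝ) * ((N : ℝ) - 2)) (‖x‖ ^ 2) := by
  have hc := mul_sub_two_pos hN
  funext x
  have hderiv := fderiv_comp_norm_sq_apply
    (hasDerivAt_bubbleBase_rpow hc (-(((N : ℝ) - 2) / 2)) (sq_nonneg ‖x‖)) x
  rw [LamW, groundW_eq_bubbleBase_rpow, hderiv, real_inner_self_eq_norm_sq]
  exact mul_rpow_add_two_mul_deriv_eq_scalingProfile hc (sq_nonneg ‖x‖)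

theorem hasTemperateGrowth_LamW (hN : 3 ≤ N) : (LamW N).HasTemperateGrowth := by
  have hbase : (fun x : EuclideanSpace ℝ (Fin N) =>
      bubbleBase ((N : ℝ) * ((N : ℝ) - 2)) (‖x‖ ^ 2)).HasTemperateGrowth := by
    simp only [bubbleBase, div_eq_mul_inv]
    fun_prop
  have hpow := hasTemperateGrowth_bubbleBase_rpow (H := EuclideanSpace ℝ (Fin N))
    (mul_sub_two_pos hN) (-(((N : ℝ) - 2) / 2) - 1)
  rw [LamW_eq_scalingProfile hN]
  unfold scalingProfile
  fun_prop

theorem groundW_rpow_eq (hN : 3 ≤ N) (x : EuclideanSpace ℝ (Fin N)) :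
    groundW N x ^ ((4 : ℝ) / ((N : ℝ) - 2)) =
      (bubbleBase ((N : ℝ) * ((N : ℝ) - 2)) (‖x‖ ^ 2) ^ 2)⁻¹ := by
  have hN2 : (N : ℝ) - 2 ≠ 0 := by
    have hN' : (3 : ℝ) ≤ N := by exact_mod_cast hN
    linarith
  have ht := bubbleBase_pos (mul_sub_two_pos hN) (sq_nonneg ‖x‖)
  simp only [groundW_eq_bubbleBase_rpow]
  have hexp : -(((N : ℝ) - 2) / 2) * (4 / ((N : ℝ) - 2)) = -((2 : ℕ) : ℝ) := by
    field_simp; norm_num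
  rw [← rpow_mul ht.le, hexp, rpow_neg ht.le, rpow_natCast]

theorem lap_LamW (hN : 3 ≤ N) (x : EuclideanSpace ℝ (Fin N)) :
    lap (LamW N) x = -((((N : ℝ) + 2) / ((N : ℝ) - 2)) *
      groundW N x ^ ((4 : ℝ) / ((N : ℝ) - 2))) * LamW N x := by
  have hN' : (3 : ℝ) ≤ N := by exact_mod_cast hN
  have hp : 0 < ((N : ℝ) - 2) / 2 := by linarith
  have hc := mul_sub_two_pos hN
  have hode := scalingProfile_ode (c := (N : ℝ) * ((N : ℝ) - 2)) hp (by ring) (sq_nonneg ‖x‖)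
  rw [groundW_rpow_eq hN, LamW_eq_scalingProfile hN,
    lap_comp_norm_sq (fun s hs => hasDerivAt_scalingProfile hc hs)
      (fun s hs => hasDerivAt_scalingProfileDeriv hc hs)]
  have hcoef : ((N : ℝ) + 2) / ((N : ℝ) - 2) = ((N - 2) / 2 + 2) / ((N - 2) / 2) := by
    field_simp; ring
  rw [hcoef]
  linear_combination hode

end GroundState

theorem eigenfunction_orthogonal_to_LamW (N : ℕ) (hN : 3 ≤ N) (nu : ℝ) (hnu : nu ≠ 0)
    (Y : SchwartzMap (EuclideanSpace ℝ (Fin N)) ℝ)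
    (hYeigen : ∀ x, -lap (⇑Y) x -
      (((N : ℝ) + 2) / ((N : ℝ) - 2)) * (groundW N x) ^ ((4 : ℝ) / ((N : ℝ) - 2)) * Y x =
        -nu ^ 2 * Y x) :
    ∫ x, Y x * LamW N x = 0 := by
  have hΛ := hasTemperateGrowth_LamW hN
  have hself := Y.integral_mul_lap_eq_of_hasTemperateGrowth hΛ
  have hpointwise : (fun x => lap Y x * LamW N x) =
      fun x => nu ^ 2 * (Y x * LamW N x) + Y x * lap (LamW N) x := by
    funext x
    rw [lap_LamW hN x]
    linear_combination (-LamW N x) * hYeigen x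
  rw [hpointwise, integral_add ((Y.integrable_mul_of_hasTemperateGrowth hΛ).const_mul _)
    (Y.integrable_mul_of_hasTemperateGrowth hΛ.lap), integral_const_mul] at hself
  have : nu ^ 2 * ∫ x, Y x * LamW N x = 0 := by linarith
  exact (mul_eq_zero.mp this).resolve_left (pow_ne_zero 2 hnu)
end

section
/- Let N ≥ 3. Define, for R ≥ 1 and λ₁, λ₂ > 0 with λ := λ₁/λ₂ ≤ 1, the function D : ℝ^N → ℝ by D(x) = −λ₁^{-N/2}(ΛW)(x/λ₁) − ((N−2)/2)(λ₁ + R²λ₂/(N(N−2)))^{-N/2} for |x| < R√(λ₁λ₂), and D(x) = 0 for |x| ≥ R√(λ₁λ₂) (D is the pointwise derivative ∂_{λ₁}V_R(λ₁,λ₂) off the truncation sphere). Then there exists a constant C > 0 depending only on N such that ∫_{ℝ^N} |D(x)| dx ≤ C R² λ₂^{N/2} λ^{(N−2)/2}. -/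
/-!
On the ball `‖x‖ < ρ = R √(λ₁λ₂)` outside which `D` vanishes, `|ΛW| ≤ 3 (N-2)/2 · W`, so `|D|`
is at most a multiple of the rescaled bubble `λ₁^{-N/2} W(x/λ₁)` plus the constant `(N-2)/2 · ζ`.
The decay `W(x) ≤ (N(N-2))^{(N-2)/2} ‖x‖^{2-N}` makes the radial integrand `r^{N-1} W(r)` at most
linear, so `∫_{B_r} W ≲ r²`, and rescaling bounds the bubble term by
`λ₁^{N/2} (ρ/λ₁)² = R² λ₁^{(N-2)/2} λ₂`. The constant term contributes
`ζ |B_ρ| ≲ (ρ² / (R²λ₂))^{N/2} = λ₁^{N/2}`, which is at most `λ₁^{(N-2)/2} λ₂` because `λ₁ ≤ λ₂`.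
-/

open MeasureTheory Real

/-- The pointwise derivative `∂_{λ₁} V_R(λ₁, λ₂)` off the truncation sphere. -/
noncomputable def Dfun (N : ℕ) (R l1 l2 : ℝ) (x : EuclideanSpace ℝ (Fin N)) : ℝ :=
  if ‖x‖ < R * Real.sqrt (l1 * l2) then
    -(l1 ^ (-((N : ℝ) / 2)) * LamW N (l1⁻¹ • x)) -
      ((N : ℝ) - 2) / 2 * (l1 + R ^ 2 * l2 / ((N : ℝ) * ((N : ℝ) - 2))) ^ (-((N : ℝ) / 2))
  else 0

open Metric Set Module

theorem one_add_sq_div_rpow_neg_le {c q s : ℝ} (hc : 0 < c) (hq : 0 ≤ q) (hs : 0 < s) :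
    (1 + s ^ 2 / c) ^ (-q) ≤ c ^ q * s ^ (-(2 * q)) := by
  calc (1 + s ^ 2 / c) ^ (-q) ≤ (s ^ 2 / c) ^ (-q) :=
        rpow_le_rpow_of_nonpos (by positivity) (by linarith) (by linarith)
    _ = c ^ q * s ^ (-(2 * q)) := by
        rw [div_rpow (by positivity) hc.le, ← rpow_natCast, ← rpow_mul hs.le,
          rpow_neg hc.le, div_inv_eq_mul, mul_comm]
        norm_num

theorem rpow_mul_div_rpow_sub_one {a b s : ℝ} (ha : 0 < a) (hb : 0 < b) :
    b ^ s * (a / b) ^ (s - 1) = a ^ s * b / a := by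
  rw [div_rpow ha.le hb.le, rpow_sub_one ha.ne', rpow_sub_one hb.ne']
  field_simp

section HaarBall

variable {E F : Type*} [NormedAddCommGroup E] [NormedSpace ℝ E] [FiniteDimensional ℝ E]
  [MeasurableSpace E] [BorelSpace E] (μ : Measure E) [μ.IsAddHaarMeasure]
  [NormedAddCommGroup F] [NormedSpace ℝ F]

theorem setIntegral_ball_comp_inv_smul (f : E → F) {a : ℝ} (ha : 0 < a) (r : ℝ) :
    ∫ x in ball (0 : E) r, f (a⁻¹ • x) ∂μ =
      a ^ finrank ℝ E • ∫ x in ball (0 : E) (r / a), f x ∂μ := by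
  rw [Measure.setIntegral_comp_smul_of_pos μ f _ (inv_pos.2 ha),
    _root_.smul_ball (inv_ne_zero ha.ne'), smul_zero, inv_pow, inv_inv, norm_inv,
    Real.norm_of_nonneg ha.le, inv_mul_eq_div]

theorem setIntegral_ball_fun_norm [Nontrivial E] (f : ℝ → F) (r : ℝ) :
    ∫ x in ball (0 : E) r, f ‖x‖ ∂μ =
      finrank ℝ E • μ.real (ball 0 1) • ∫ y in Ioo 0 r, y ^ (finrank ℝ E - 1) • f y := by
  have hindicator : ∫ x in ball (0 : E) r, f ‖x‖ ∂μ = ∫ x, (Iio r).indicator f ‖x‖ ∂μ := by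
    rw [← integral_indicator measurableSet_ball]
    congr 1 with x
    simp [indicator]
  rw [hindicator, integral_fun_norm_addHaar μ ((Iio r).indicator f)]
  simp_rw [← indicator_smul]
  rw [setIntegral_indicator measurableSet_Iio, Ioi_inter_Iio]

end HaarBall

section GroundState

variable {N : ℕ}

theorem cast_mul_cast_sub_two_pos (hN : 3 ≤ N) : (0 : ℝ) < N * (N - 2) := by
  have : (3 : ℝ) ≤ N := by exact_mod_cast hN
  nlinarith

theorem cast_sub_two_div_two_pos (hN : 3 ≤ N) : (0 : ℝ) < ((N : ℝ) - 2) / 2 := by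
  have : (3 : ℝ) ≤ N := by exact_mod_cast hN
  linarith

theorem continuous_groundW (hN : 3 ≤ N) : Continuous (groundW N) := by
  have hc := cast_mul_cast_sub_two_pos hN
  exact Continuous.rpow_const (by fun_prop) fun x => Or.inl (by positivity)

theorem fderiv_groundW_apply_self (hN : 3 ≤ N) (x : EuclideanSpace ℝ (Fin N)) :
    fderiv ℝ (groundW N) x x =
      -(((N : ℝ) - 2) / 2) * (1 + ‖x‖ ^ 2 / (N * (N - 2))) ^ (-(((N : ℝ) - 2) / 2) - 1) *
        (2 * ‖x‖ ^ 2 / (N * (N - 2))) := by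
  have hc := cast_mul_cast_sub_two_pos hN
  have hbase :=
    ((hasStrictFDerivAt_norm_sq x).hasFDerivAt.mul_const ((N : ℝ) * (N - 2))⁻¹).const_add 1
  simp only [← div_eq_mul_inv] at hbase
  have hW : HasFDerivAt (groundW N) _ x :=
    hbase.rpow_const (p := -(((N : ℝ) - 2) / 2)) (Or.inl (by positivity))
  rw [hW.fderiv]
  simp only [smul_apply, innerSL_apply_apply, real_inner_self_eq_norm_sq,
    smul_eq_mul, nsmul_eq_mul, Nat.cast_ofNat]
  ring

theorem abs_LamW_le (hN : 3 ≤ N) (x : EuclideanSpace ℝ (Fin N)) :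
    |LamW N x| ≤ 3 * (((N : ℝ) - 2) / 2) * groundW N x := by
  have hc := cast_mul_cast_sub_two_pos hN
  have hp := cast_sub_two_div_two_pos hN
  rw [LamW, fderiv_groundW_apply_self hN, groundW]
  set p : ℝ := ((N : ℝ) - 2) / 2
  set u : ℝ := 1 + ‖x‖ ^ 2 / (N * (N - 2)) with hu
  have hu1 : 1 ≤ u := le_add_of_nonneg_right (by positivity)
  have hx : 2 * ‖x‖ ^ 2 / (N * (N - 2)) = 2 * (u - 1) := by rw [hu]; field_simp; ring
  have hsplit : u ^ (-p) = u ^ (-p - 1) * u := by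
    rw [← rpow_add_one (by positivity)]; ring_nf
  have hmono : u ^ (-p - 1) ≤ u ^ (-p) := rpow_le_rpow_of_exponent_le hu1 (by linarith)
  have hpos : 0 < u ^ (-p - 1) := rpow_pos_of_pos (by positivity) _
  have hLam : p * u ^ (-p) + -p * u ^ (-p - 1) * (2 * (u - 1)) =
      2 * p * u ^ (-p - 1) - p * u ^ (-p) := by
    rw [hsplit]; ring
  rw [hx, hLam, abs_le]
  constructor <;> nlinarith

theorem setIntegral_ball_groundW_le (hN : 3 ≤ N) {r : ℝ} (hr : 0 ≤ r) :
    ∫ x in ball (0 : EuclideanSpace ℝ (Fin N)) r, groundW N x ≤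
      N * volume.real (ball (0 : EuclideanSpace ℝ (Fin N)) 1) *
        ((N : ℝ) * (N - 2)) ^ (((N : ℝ) - 2) / 2) * (r ^ 2 / 2) := by
  have : NeZero N := ⟨by omega⟩
  have hc := cast_mul_cast_sub_two_pos hN
  have hp := cast_sub_two_div_two_pos hN
  set c : ℝ := N * (N - 2)
  set p : ℝ := ((N : ℝ) - 2) / 2
  set v := volume.real (ball (0 : EuclideanSpace ℝ (Fin N)) 1)
  have hdecay : ∀ y ∈ Ioo 0 r, y ^ (N - 1) * (1 + y ^ 2 / c) ^ (-p) ≤ c ^ p * y := by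
    rintro y ⟨hy, -⟩
    calc y ^ (N - 1) * (1 + y ^ 2 / c) ^ (-p) ≤ y ^ (N - 1) * (c ^ p * y ^ (-(2 * p))) := by
          gcongr; exact one_add_sq_div_rpow_neg_le hc hp.le hy
      _ = c ^ p * (y ^ ((N - 1 : ℕ) : ℝ) * y ^ (-(2 * p))) := by rw [rpow_natCast]; ring
      _ = c ^ p * y := by
          rw [← rpow_add hy, Nat.cast_sub (by omega),
            show (N : ℝ) - (1 : ℕ) + -(2 * p) = 1 by simp only [p]; ring, rpow_one]
  have hcont : Continuous fun y : ℝ => y ^ (N - 1) * (1 + y ^ 2 / c) ^ (-p) :=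
    (continuous_pow _).mul (Continuous.rpow_const (by fun_prop) fun y => Or.inl (by positivity))
  calc ∫ x in ball (0 : EuclideanSpace ℝ (Fin N)) r, groundW N x
      = N * (v * ∫ y in Ioo 0 r, y ^ (N - 1) * (1 + y ^ 2 / c) ^ (-p)) := by
        rw [show groundW N = fun x => (1 + ‖x‖ ^ 2 / c) ^ (-p) from rfl,
          setIntegral_ball_fun_norm volume (fun s : ℝ => (1 + s ^ 2 / c) ^ (-p)),
          finrank_euclideanSpace_fin, nsmul_eq_mul, smul_eq_mul]
        simp only [smul_eq_mul, v]
    _ ≤ N * (v * ∫ y in Ioo 0 r, c ^ p * y) := by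
        refine mul_le_mul_of_nonneg_left (mul_le_mul_of_nonneg_left ?_ measureReal_nonneg)
          (Nat.cast_nonneg N)
        exact setIntegral_mono_on (hcont.integrableOn_Icc.mono_set Ioo_subset_Icc_self)
          ((by fun_prop : Continuous fun y : ℝ => c ^ p * y).integrableOn_Icc.mono_set
            Ioo_subset_Icc_self) measurableSet_Ioo hdecay
    _ = N * v * c ^ p * (r ^ 2 / 2) := by
        rw [← integral_Ioc_eq_integral_Ioo, ← intervalIntegral.integral_of_le hr,
          intervalIntegral.integral_const_mul, integral_id]
        ring

end GroundState

section TruncatedBubble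

variable {N : ℕ} {R l1 l2 : ℝ}

theorem integral_abs_Dfun_le_setIntegral (hN : 3 ≤ N) (hl1 : 0 < l1) (hl2 : 0 ≤ l2) :
    ∫ x, |Dfun N R l1 l2 x| ≤
      ∫ x in ball (0 : EuclideanSpace ℝ (Fin N)) (R * √(l1 * l2)),
        (3 * (((N : ℝ) - 2) / 2) * l1 ^ (-((N : ℝ) / 2)) * groundW N (l1⁻¹ • x) +
          ((N : ℝ) - 2) / 2 * (l1 + R ^ 2 * l2 / (N * (N - 2))) ^ (-((N : ℝ) / 2))) := by
  have hc := cast_mul_cast_sub_two_pos hN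
  have hp := cast_sub_two_div_two_pos hN
  have hA : 0 < l1 ^ (-((N : ℝ) / 2)) := rpow_pos_of_pos hl1 _
  have hζ : 0 ≤ (l1 + R ^ 2 * l2 / (N * (N - 2))) ^ (-((N : ℝ) / 2)) :=
    rpow_nonneg (by positivity) _
  have hcont : Continuous fun x : EuclideanSpace ℝ (Fin N) =>
      3 * (((N : ℝ) - 2) / 2) * l1 ^ (-((N : ℝ) / 2)) * groundW N (l1⁻¹ • x) +
        ((N : ℝ) - 2) / 2 * (l1 + R ^ 2 * l2 / (N * (N - 2))) ^ (-((N : ℝ) / 2)) :=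
    (continuous_const.mul ((continuous_groundW hN).comp (continuous_const_smul _))).add
      continuous_const
  rw [← setIntegral_eq_integral_of_forall_compl_eq_zero (s := ball 0 (R * √(l1 * l2)))]
  · refine integral_mono_of_nonneg (.of_forall fun _ => abs_nonneg _)
      ((hcont.continuousOn.integrableOn_compact (isCompact_closedBall _ _)).mono_set
        ball_subset_closedBall)
      ((ae_restrict_iff' measurableSet_ball).2 (.of_forall fun x hx => ?_))
    rw [mem_ball_zero_iff] at hx
    simp only [Dfun, if_pos hx]
    have hL := mul_le_mul_of_nonneg_left (abs_LamW_le hN (l1⁻¹ • x)) hA.le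
    calc _ ≤ |l1 ^ (-((N : ℝ) / 2)) * LamW N (l1⁻¹ • x)| +
          |((N : ℝ) - 2) / 2 * (l1 + R ^ 2 * l2 / (N * (N - 2))) ^ (-((N : ℝ) / 2))| := by
          rw [← abs_neg (l1 ^ _ * _)]; exact abs_sub _ _
      _ ≤ _ := by
          rw [abs_mul, abs_of_pos hA, abs_of_nonneg (mul_nonneg hp.le hζ)]
          linarith
  · intro x hx
    rw [mem_ball_zero_iff, not_lt] at hx
    simp [Dfun, not_lt.2 hx]

theorem zeta_mul_pow_le (hN : 3 ≤ N) (hR : 0 < R) (hl1 : 0 < l1) (hl2 : 0 < l2) :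
    (l1 + R ^ 2 * l2 / (N * (N - 2))) ^ (-((N : ℝ) / 2)) * (R * √(l1 * l2)) ^ N ≤
      (N * (N - 2) * l1) ^ ((N : ℝ) / 2) := by
  have hc := cast_mul_cast_sub_two_pos hN
  set c : ℝ := N * (N - 2)
  set b := l1 + R ^ 2 * l2 / c with hb
  have hb0 : 0 < b := by positivity
  have hρN : (R * √(l1 * l2)) ^ N = (R ^ 2 * l1 * l2) ^ ((N : ℝ) / 2) := by
    rw [← rpow_natCast, show (N : ℝ) = 2 * (N / 2) by ring, rpow_mul (by positivity),
      rpow_two, mul_pow, sq_sqrt (by positivity), mul_div_cancel_left₀ _ two_ne_zero, mul_assoc]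
  have hratio : R ^ 2 * l1 * l2 / b ≤ c * l1 := by
    have hexpand : c * l1 * b = c * l1 * l1 + R ^ 2 * l1 * l2 := by rw [hb]; field_simp
    rw [div_le_iff₀ hb0, hexpand]
    nlinarith [mul_pos hc hl1]
  rw [hρN, rpow_neg hb0.le, ← div_eq_inv_mul, ← div_rpow (by positivity) hb0.le]
  exact rpow_le_rpow (by positivity) hratio (by positivity)

theorem integral_abs_Dfun_le_rescaled_add_const (hN : 3 ≤ N) (hR : 0 ≤ R) (hl1 : 0 < l1)
    (hl2 : 0 ≤ l2) :
    ∫ x, |Dfun N R l1 l2 x| ≤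
      3 * (((N : ℝ) - 2) / 2) * (N * volume.real (ball (0 : EuclideanSpace ℝ (Fin N)) 1) *
          ((N : ℝ) * (N - 2)) ^ (((N : ℝ) - 2) / 2) / 2) *
          (l1 ^ ((N : ℝ) / 2) * (R * √(l1 * l2) / l1) ^ 2) +
        ((N : ℝ) - 2) / 2 * volume.real (ball (0 : EuclideanSpace ℝ (Fin N)) 1) *
          ((l1 + R ^ 2 * l2 / (N * (N - 2))) ^ (-((N : ℝ) / 2)) * (R * √(l1 * l2)) ^ N) := by
  have : NeZero N := ⟨by omega⟩
  have hp := cast_sub_two_div_two_pos hN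
  set ρ := R * √(l1 * l2)
  have hρ : 0 ≤ ρ := by positivity
  set A := 3 * (((N : ℝ) - 2) / 2) * l1 ^ (-((N : ℝ) / 2))
  set B := ((N : ℝ) - 2) / 2 * (l1 + R ^ 2 * l2 / (N * (N - 2))) ^ (-((N : ℝ) / 2))
  have hint : IntegrableOn (fun x => groundW N (l1⁻¹ • x)) (ball 0 ρ) :=
    (((continuous_groundW hN).comp (continuous_const_smul _)).continuousOn.integrableOn_compact
      (isCompact_closedBall _ _)).mono_set ball_subset_closedBall
  have hscale : l1 ^ (-((N : ℝ) / 2)) * l1 ^ N = l1 ^ ((N : ℝ) / 2) := by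
    rw [← rpow_natCast, ← rpow_add hl1]; ring_nf
  calc ∫ x, |Dfun N R l1 l2 x| ≤ ∫ x in ball 0 ρ, (A * groundW N (l1⁻¹ • x) + B) :=
        integral_abs_Dfun_le_setIntegral hN hl1 hl2
    _ = A * (l1 ^ N * ∫ x in ball 0 (ρ / l1), groundW N x) +
          ρ ^ N * volume.real (ball (0 : EuclideanSpace ℝ (Fin N)) 1) * B := by
        rw [integral_add (hint.const_mul A) (integrableOn_const measure_ball_lt_top.ne),
          integral_const_mul, setIntegral_ball_comp_inv_smul volume _ hl1, setIntegral_const,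
          ← Measure.addHaar_real_closedBall_eq_addHaar_real_ball,
          Measure.addHaar_real_closedBall volume _ hρ,
          finrank_euclideanSpace_fin, smul_eq_mul, smul_eq_mul]
    _ ≤ A * (l1 ^ N * (N * volume.real (ball (0 : EuclideanSpace ℝ (Fin N)) 1) *
          ((N : ℝ) * (N - 2)) ^ (((N : ℝ) - 2) / 2) * ((ρ / l1) ^ 2 / 2))) +
          ρ ^ N * volume.real (ball (0 : EuclideanSpace ℝ (Fin N)) 1) * B := by
        gcongr
        exact setIntegral_ball_groundW_le hN (by positivity)
    _ = _ := by
        simp only [A, B, ← hscale]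
        ring

noncomputable def truncatedBubbleConst (N : ℕ) : ℝ :=
  3 * (((N : ℝ) - 2) / 2) * (N * volume.real (ball (0 : EuclideanSpace ℝ (Fin N)) 1) *
      ((N : ℝ) * (N - 2)) ^ (((N : ℝ) - 2) / 2) / 2) +
    ((N : ℝ) - 2) / 2 * volume.real (ball (0 : EuclideanSpace ℝ (Fin N)) 1) *
      ((N : ℝ) * (N - 2)) ^ ((N : ℝ) / 2)

theorem truncatedBubbleConst_pos (hN : 3 ≤ N) : 0 < truncatedBubbleConst N := by
  have : NeZero N := ⟨by omega⟩
  have hc := cast_mul_cast_sub_two_pos hN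
  have hp := cast_sub_two_div_two_pos hN
  have hv : 0 < volume.real (ball (0 : EuclideanSpace ℝ (Fin N)) 1) :=
    ENNReal.toReal_pos (measure_ball_pos _ _ one_pos).ne' measure_ball_lt_top.ne
  unfold truncatedBubbleConst
  positivity

theorem integral_abs_Dfun_le (hN : 3 ≤ N) (hR : 1 ≤ R) (hl1 : 0 < l1) (hl12 : l1 ≤ l2) :
    ∫ x, |Dfun N R l1 l2 x| ≤
      truncatedBubbleConst N * R ^ 2 * (l1 ^ ((N : ℝ) / 2) * l2 / l1) := by
  have hc := cast_mul_cast_sub_two_pos hN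
  have hp := cast_sub_two_div_two_pos hN
  have hR0 : 0 < R := zero_lt_one.trans_le hR
  have hl2 : 0 < l2 := hl1.trans_le hl12
  set T := l1 ^ ((N : ℝ) / 2) * l2 / l1
  have hsq : l1 ^ ((N : ℝ) / 2) * (R * √(l1 * l2) / l1) ^ 2 = R ^ 2 * T := by
    rw [div_pow, mul_pow, sq_sqrt (by positivity)]
    simp only [T]
    field_simp
  have hsmall : l1 ^ ((N : ℝ) / 2) ≤ R ^ 2 * T := by
    have : l1 ^ ((N : ℝ) / 2) ≤ T := by
      rw [le_div_iff₀ hl1]; gcongr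
    nlinarith [one_le_pow₀ (n := 2) hR, rpow_pos_of_pos hl1 ((N : ℝ) / 2)]
  set v := volume.real (ball (0 : EuclideanSpace ℝ (Fin N)) 1)
  set c : ℝ := N * (N - 2)
  set p : ℝ := ((N : ℝ) - 2) / 2
  calc ∫ x, |Dfun N R l1 l2 x|
      ≤ 3 * p * (N * v * c ^ p / 2) * (l1 ^ ((N : ℝ) / 2) * (R * √(l1 * l2) / l1) ^ 2) +
          p * v * ((l1 + R ^ 2 * l2 / c) ^ (-((N : ℝ) / 2)) * (R * √(l1 * l2)) ^ N) :=
        integral_abs_Dfun_le_rescaled_add_const hN hR0.le hl1 hl2.le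
    _ ≤ 3 * p * (N * v * c ^ p / 2) * (R ^ 2 * T) +
          p * v * (c ^ ((N : ℝ) / 2) * (R ^ 2 * T)) := by
        rw [hsq]
        gcongr _ + p * v * ?_
        refine (zeta_mul_pow_le hN hR0 hl1 hl2).trans ?_
        rw [mul_rpow hc.le hl1.le]
        gcongr
    _ = truncatedBubbleConst N * R ^ 2 * T := by unfold truncatedBubbleConst; ring

end TruncatedBubble

theorem deriv_truncated_bubble_L1_estimate (N : ℕ) (hN : 3 ≤ N) :
    ∃ C > (0 : ℝ), ∀ R ≥ (1 : ℝ), ∀ l1 l2 : ℝ, 0 < l1 → 0 < l2 → l1 / l2 ≤ 1 →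
      (∫ x, |Dfun N R l1 l2 x|) ≤
        C * R ^ 2 * l2 ^ ((N : ℝ) / 2) * (l1 / l2) ^ (((N : ℝ) - 2) / 2) := by
  refine ⟨truncatedBubbleConst N, truncatedBubbleConst_pos hN, fun R hR l1 l2 hl1 hl2 hll => ?_⟩
  rw [mul_assoc _ (l2 ^ _), show ((N : ℝ) - 2) / 2 = N / 2 - 1 by ring,
    rpow_mul_div_rpow_sub_one hl1 hl2]
  exact integral_abs_Dfun_le hN hR hl1 ((div_le_one hl2).1 hll)
end

section
/- Let N ≥ 3 and fix R > 0. Then lim_{λ → 0⁺} λ^{-(N−2)/4} · (∫_{|x| ≤ R√λ} (f'(W_λ(x)))^{2N/(N+2)} dx)^{(N+2)/(2N)} = 0, where f'(u) = ((N+2)/(N−2))|u|^{4/(N−2)}. -/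
/-!
Explicitly, `W_λ(x) = (λ + |x|² / (N(N-2)λ))^{-(N-2)/2}`, so `f'(W_λ)^p` is a constant
times `base^{-2p}` where `base` dominates both `λ` and `|x|² / (N(N-2)λ)`. Splitting
`-2p = -1 - (2p-1)` bounds the integrand by a constant times `λ^{2p-2} |x|^{-2(2p-1)}`, a singular
power that is integrable since `2(2p-1) < N`. Integrating it in polar coordinates over the ball of
radius `R√λ` gives `O(λ^{N/2-1})` for the integral, whatever `p`; with `p = 2N/(N+2)` the quantity
in the limit is then `O(λ^{(N-2)/(2N)})`.
-/

open MeasureTheory Real Filter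

noncomputable def fprime (N : ℕ) (u : ℝ) : ℝ :=
  (((N : ℝ) + 2) / ((N : ℝ) - 2)) * |u| ^ ((4 : ℝ) / ((N : ℝ) - 2))

/-- The rescaled ground state `W_λ`. -/
noncomputable def Wl (N : ℕ) (lam : ℝ) (x : EuclideanSpace ℝ (Fin N)) : ℝ :=
  lam ^ (-(((N : ℝ) - 2) / 2)) * groundW N (lam⁻¹ • x)

open Set Metric Module

section HaarBall

variable {E : Type*} [NormedAddCommGroup E] [NormedSpace ℝ E] [FiniteDimensional ℝ E]
  [MeasurableSpace E] [BorelSpace E] [Nontrivial E] (μ : Measure E) [μ.IsAddHaarMeasure]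

theorem integrableOn_closedBall_norm_rpow_neg {s : ℝ} (hs : s < finrank ℝ E) (ρ : ℝ) :
    IntegrableOn (fun x : E => ‖x‖ ^ (-s)) (closedBall 0 ρ) μ := by
  refine (integrableOn_ball_of_norm_le_rpow (r := ρ + 1) (C := 1) finrank_pos hs
    (.of_forall fun x => ?_) (continuous_norm.measurable.pow_const _).aestronglyMeasurable).mono_set
    (closedBall_subset_ball (by linarith))
  rw [one_mul, norm_of_nonneg (by positivity)]

theorem setIntegral_closedBall_norm_rpow_neg {s : ℝ} (hs : s < finrank ℝ E) {ρ : ℝ}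
    (hρ : 0 ≤ ρ) :
    ∫ x in closedBall 0 ρ, ‖x‖ ^ (-s) ∂μ =
      finrank ℝ E * μ.real (ball 0 1) * ρ ^ (finrank ℝ E - s) / (finrank ℝ E - s) := by
  have hd : 0 < (finrank ℝ E : ℝ) - s := by linarith
  have hradial : ∀ x : E, (closedBall 0 ρ).indicator (fun x : E => ‖x‖ ^ (-s)) x =
      (Iic ρ).indicator (fun y : ℝ => y ^ (-s)) ‖x‖ := fun x => by
    by_cases hx : ‖x‖ ≤ ρ <;> simp [indicator, hx]
  have hline :
      ∫ y in Ioi (0 : ℝ), y ^ (finrank ℝ E - 1) • (Iic ρ).indicator (fun y : ℝ => y ^ (-s)) y =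
      ∫ y in (0 : ℝ)..ρ, y ^ ((finrank ℝ E : ℝ) - s - 1) := by
    rw [intervalIntegral.integral_of_le hρ, ← integral_indicator measurableSet_Ioc,
      ← integral_indicator measurableSet_Ioi]
    congr 1 with y
    by_cases hy0 : 0 < y
    · by_cases hyρ : y ≤ ρ
      · simp only [indicator, mem_Ioi, mem_Iic, mem_Ioc, hy0, hyρ, and_self, if_true, smul_eq_mul,
          ← rpow_natCast, ← rpow_add hy0]
        rw [Nat.cast_pred finrank_pos]
        ring_nf
      · simp [indicator, hy0, hyρ]
    · simp [indicator, hy0]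
  rw [← integral_indicator measurableSet_closedBall, funext hradial, integral_fun_norm_addHaar,
    hline, integral_rpow (Or.inl (by linarith)), sub_add_cancel,
    zero_rpow hd.ne', nsmul_eq_mul, smul_eq_mul]
  ring

theorem setIntegral_closedBall_le_of_le_norm_rpow_neg {s : ℝ} (hs : s < finrank ℝ E) {ρ : ℝ}
    (hρ : 0 ≤ ρ) {f : E → ℝ} {M : ℝ} (hf0 : ∀ x, 0 ≤ f x) (hf : ∀ x, x ≠ 0 → f x ≤ M * ‖x‖ ^ (-s)) :
    ∫ x in closedBall 0 ρ, f x ∂μ ≤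
      M * (finrank ℝ E * μ.real (ball 0 1) * ρ ^ (finrank ℝ E - s) / (finrank ℝ E - s)) := by
  have hae_ne : ∀ᵐ x ∂μ.restrict (closedBall 0 ρ), x ≠ 0 :=
    ae_restrict_of_ae (compl_mem_ae_iff.2 (measure_singleton 0))
  calc ∫ x in closedBall 0 ρ, f x ∂μ ≤ ∫ x in closedBall 0 ρ, M * ‖x‖ ^ (-s) ∂μ :=
        integral_mono_of_nonneg (.of_forall hf0)
          ((integrableOn_closedBall_norm_rpow_neg μ hs ρ).const_mul M)
          (hae_ne.mono hf)
    _ = _ := by rw [integral_const_mul, setIntegral_closedBall_norm_rpow_neg μ hs hρ]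

end HaarBall

theorem Real.rpow_neg_add_le {u A B a b : ℝ} (hA : 0 < A) (hB : 0 < B) (hAu : A ≤ u)
    (hBu : B ≤ u) (ha : 0 ≤ a) (hb : 0 ≤ b) : u ^ (-(a + b)) ≤ A ^ (-a) * B ^ (-b) := by
  rw [neg_add, rpow_add (hA.trans_le hAu)]
  exact mul_le_mul (rpow_le_rpow_of_nonpos hA hAu (neg_nonpos.2 ha))
    (rpow_le_rpow_of_nonpos hB hBu (neg_nonpos.2 hb))
    (rpow_nonneg (hB.le.trans hBu) _) (rpow_nonneg hA.le _)

theorem Wl_eq_rpow {N : ℕ} (hN : 3 ≤ N) {lam : ℝ} (hlam : 0 < lam) (x : EuclideanSpace ℝ (Fin N)) :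
    Wl N lam x = (lam + ‖x‖ ^ 2 / (N * (N - 2) * lam)) ^ (-(((N : ℝ) - 2) / 2)) := by
  have hN2 : (0 : ℝ) < N - 2 := sub_pos.2 (by exact_mod_cast hN)
  rw [Wl, groundW, ← mul_rpow hlam.le (by positivity), norm_smul, norm_inv, norm_of_nonneg hlam.le]
  congr 1
  field_simp

theorem fprime_Wl_eq {N : ℕ} (hN : 3 ≤ N) {lam : ℝ} (hlam : 0 < lam)
    (x : EuclideanSpace ℝ (Fin N)) :
    fprime N (Wl N lam x) =
      ((N : ℝ) + 2) / (N - 2) * (lam + ‖x‖ ^ 2 / (N * (N - 2) * lam)) ^ (-2 : ℝ) := by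
  have hN2 : (0 : ℝ) < N - 2 := sub_pos.2 (by exact_mod_cast hN)
  have hbase : 0 ≤ lam + ‖x‖ ^ 2 / (N * (N - 2) * lam) := by positivity
  rw [fprime, Wl_eq_rpow hN hlam, abs_of_nonneg (by positivity), ← rpow_mul hbase]
  congr 2
  field_simp
  norm_num

theorem fprime_nonneg {N : ℕ} (hN : 2 ≤ N) (u : ℝ) : 0 ≤ fprime N u := by
  have : (2 : ℝ) ≤ N := by exact_mod_cast hN
  exact mul_nonneg (div_nonneg (by linarith) (by linarith)) (rpow_nonneg (abs_nonneg u) _)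

theorem fprime_Wl_rpow_le {N : ℕ} (hN : 3 ≤ N) {p : ℝ} (hp : 1 / 2 ≤ p) {lam : ℝ} (hlam : 0 < lam)
    {x : EuclideanSpace ℝ (Fin N)} (hx : x ≠ 0) :
    fprime N (Wl N lam x) ^ p ≤
      (((N : ℝ) + 2) / (N - 2)) ^ p * (N * (N - 2) * lam) ^ (2 * p - 1) * lam⁻¹ *
        ‖x‖ ^ (-(2 * (2 * p - 1))) := by
  have hN2 : (0 : ℝ) < N - 2 := sub_pos.2 (by exact_mod_cast hN)
  set c : ℝ := N * (N - 2) * lam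
  have hc : 0 < c := by positivity
  have hfar : 0 < ‖x‖ ^ 2 / c := by positivity
  have hbase : 0 < lam + ‖x‖ ^ 2 / c := by positivity
  have hfar_rpow :
      (‖x‖ ^ 2 / c) ^ (-(2 * p - 1)) = c ^ (2 * p - 1) * ‖x‖ ^ (-(2 * (2 * p - 1))) := by
    rw [div_eq_mul_inv, mul_rpow (by positivity) (by positivity), ← rpow_natCast,
      ← rpow_mul (norm_nonneg x), inv_rpow hc.le, rpow_neg hc.le, inv_inv]
    push_cast
    ring_nf
  rw [fprime_Wl_eq hN hlam, mul_rpow (by positivity) (by positivity), ← rpow_mul hbase.le,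
    show (-2 : ℝ) * p = -(1 + (2 * p - 1)) by ring]
  calc _ ≤ (((N : ℝ) + 2) / (N - 2)) ^ p * (lam ^ (-1 : ℝ) * (‖x‖ ^ 2 / c) ^ (-(2 * p - 1))) := by
        gcongr
        exact Real.rpow_neg_add_le hlam hfar (by linarith) (by linarith) zero_le_one (by linarith)
    _ = _ := by rw [hfar_rpow, rpow_neg_one]; ring

theorem integral_fprime_Wl_rpow_le {N : ℕ} (hN : 3 ≤ N) {p : ℝ} (hp : 1 / 2 ≤ p)
    (hpN : 2 * (2 * p - 1) < N) {R : ℝ} (hR : 0 ≤ R) :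
    ∃ C, 0 ≤ C ∧ ∀ lam, 0 < lam →
      ∫ x in {x : EuclideanSpace ℝ (Fin N) | ‖x‖ ≤ R * √lam}, fprime N (Wl N lam x) ^ p ≤
        C * lam ^ ((N : ℝ) / 2 - 1) := by
  have hN2 : (0 : ℝ) < N - 2 := sub_pos.2 (by exact_mod_cast hN)
  have : Nonempty (Fin N) := Fin.pos_iff_nonempty.1 (by omega)
  set s : ℝ := 2 * (2 * p - 1)
  set K : ℝ := N * volume.real (ball (0 : EuclideanSpace ℝ (Fin N)) 1) / (N - s)
  have hK : 0 ≤ K := div_nonneg (by positivity) (by linarith)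
  refine ⟨(((N : ℝ) + 2) / (N - 2)) ^ p * (N * (N - 2)) ^ (2 * p - 1) * K * R ^ ((N : ℝ) - s),
    by positivity, fun lam hlam => ?_⟩
  have hball : {x : EuclideanSpace ℝ (Fin N) | ‖x‖ ≤ R * √lam} = closedBall 0 (R * √lam) := by
    ext x
    simp
  have hpow :
      lam ^ (2 * p - 1) * lam⁻¹ * lam ^ (1 / 2 * ((N : ℝ) - s)) = lam ^ ((N : ℝ) / 2 - 1) := by
    rw [← rpow_neg_one, ← rpow_add hlam, ← rpow_add hlam]
    congr 1
    simp only [s]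
    ring
  rw [hball]
  refine (setIntegral_closedBall_le_of_le_norm_rpow_neg volume (by simpa using hpN) (by positivity)
    (fun x => rpow_nonneg (fprime_nonneg (by omega) _) _)
    (fun x hx => fprime_Wl_rpow_le hN hp hlam hx)).trans_eq ?_
  rw [finrank_euclideanSpace_fin, mul_rpow (by positivity) hlam.le, mul_rpow hR (sqrt_nonneg lam),
    sqrt_eq_rpow, ← rpow_mul hlam.le, ← hpow]
  ring

theorem fprime_W_dual_norm_small (N : ℕ) (hN : 3 ≤ N) (R : ℝ) (hR : 0 < R) :
    Tendsto (fun lam : ℝ =>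
        lam ^ (-(((N : ℝ) - 2) / 4)) *
          (∫ x in {x : EuclideanSpace ℝ (Fin N) | ‖x‖ ≤ R * Real.sqrt lam},
              (fprime N (Wl N lam x)) ^ (2 * (N : ℝ) / ((N : ℝ) + 2))) ^
            (((N : ℝ) + 2) / (2 * (N : ℝ))))
      (nhdsWithin 0 (Set.Ioi 0)) (nhds 0) := by
  have hN' : (3 : ℝ) ≤ N := by exact_mod_cast hN
  obtain ⟨C, hC, hI⟩ := integral_fprime_Wl_rpow_le hN (p := 2 * (N : ℝ) / ((N : ℝ) + 2))
    (by rw [le_div_iff₀ (by linarith)]; linarith)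
    (by rw [← sub_pos]; field_simp; nlinarith) hR.le
  have hI0 : ∀ lam : ℝ, 0 ≤ ∫ x in {x : EuclideanSpace ℝ (Fin N) | ‖x‖ ≤ R * √lam},
      fprime N (Wl N lam x) ^ (2 * (N : ℝ) / ((N : ℝ) + 2)) := fun lam =>
    setIntegral_nonneg (measurableSet_le measurable_norm measurable_const)
      fun x _ => rpow_nonneg (fprime_nonneg (by omega) _) _
  set q : ℝ := ((N : ℝ) + 2) / (2 * (N : ℝ))
  set e : ℝ := ((N : ℝ) - 2) / (2 * N)
  have he : 0 < e := div_pos (by linarith) (by positivity)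
  have hlim : Tendsto (fun lam : ℝ => C ^ q * lam ^ e) (nhdsWithin 0 (Ioi 0)) (nhds 0) := by
    simpa [zero_rpow he.ne'] using
      (((continuous_rpow_const he.le).tendsto 0).const_mul (C ^ q)).mono_left nhdsWithin_le_nhds
  refine tendsto_of_tendsto_of_tendsto_of_le_of_le' tendsto_const_nhds hlim ?_ ?_ <;>
    filter_upwards [self_mem_nhdsWithin] with lam (hlam : 0 < lam)
  · exact mul_nonneg (rpow_nonneg hlam.le _) (rpow_nonneg (hI0 lam) _)
  · calc _ ≤ lam ^ (-(((N : ℝ) - 2) / 4)) * (C * lam ^ ((N : ℝ) / 2 - 1)) ^ q := by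
          gcongr
          · exact hI0 lam
          · exact hI lam hlam
      _ = C ^ q * lam ^ e := by
          rw [mul_rpow hC (by positivity), ← rpow_mul hlam.le, mul_left_comm, ← rpow_add hlam]
          congr 2
          simp only [q, e]
          field_simp
          ring
end

section
/- Let ψ : ℝ → ℝ be analytic on a neighbourhood of 0 with ψ(0) = 0 and ψ'(0) ≠ 0. Then there exists a function φ analytic on a neighbourhood of 0 such that φ(0) = 0, φ'(0) = 1, and φ'(x)·ψ(x) = φ(x)·ψ'(0) for all x in that neighbourhood. (In particular, y = φ(x) transforms the ODE x' = ψ(x) into y' = ψ'(0)y.) -/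
/-!
Write `ψ x = x * u x` and `u x = λ + x * v x` with `u`, `v` analytic and `λ = u 0 = ψ'(0) ≠ 0`.
For `φ x = x * exp (H x)` the equation `φ' ψ = λ φ` becomes `(1 + x H') u = λ`, i.e. `H' = -v / u`,
which is analytic near `0`. So everything reduces to integrating an analytic function, done
termwise on its power series: the integrated series converges at least where the original one
does, and its derivative series is the original one.
-/

open Filter

namespace FormalMultilinearSeries

variable {𝕜 F : Type*} [RCLike 𝕜] [NormedAddCommGroup F] [NormedSpace 𝕜 F]
  (p : FormalMultilinearSeries 𝕜 𝕜 F)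

noncomputable def antiderivSeries : FormalMultilinearSeries 𝕜 𝕜 F
  | 0 => 0
  | n + 1 => ContinuousMultilinearMap.mkPiRing 𝕜 (Fin (n + 1)) (((n : 𝕜) + 1)⁻¹ • p.coeff n)

@[simp]
lemma antiderivSeries_zero : p.antiderivSeries 0 = 0 := rfl

@[simp]
lemma coeff_antiderivSeries_succ (n : ℕ) :
    p.antiderivSeries.coeff (n + 1) = ((n : 𝕜) + 1)⁻¹ • p.coeff n := by
  simp only [coeff, antiderivSeries, ContinuousMultilinearMap.mkPiRing_apply, Pi.one_apply,
    Finset.prod_const_one, one_smul]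

lemma norm_antiderivSeries_succ_le (n : ℕ) : ‖p.antiderivSeries (n + 1)‖ ≤ ‖p n‖ := by
  have h : ‖((n : 𝕜) + 1)‖ = n + 1 := by exact_mod_cast RCLike.norm_natCast (K := 𝕜) (n + 1)
  rw [norm_apply_eq_norm_coef, norm_apply_eq_norm_coef, coeff_antiderivSeries_succ, norm_smul,
    norm_inv, h]
  exact mul_le_of_le_one_left (norm_nonneg _) (inv_le_one_of_one_le₀ (by simp))

lemma radius_le_radius_antiderivSeries : p.radius ≤ p.antiderivSeries.radius := by
  refine ENNReal.le_of_forall_nnreal_lt fun r hr => ?_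
  obtain ⟨C, hC0, hC⟩ := p.norm_mul_pow_le_of_lt_radius hr
  refine p.antiderivSeries.le_radius_of_bound (C * r) fun n => ?_
  cases n with
  | zero => simpa using mul_nonneg hC0.le r.2
  | succ n =>
    calc ‖p.antiderivSeries (n + 1)‖ * (r : ℝ) ^ (n + 1) ≤ ‖p n‖ * r ^ n * r := by
          rw [pow_succ, ← mul_assoc]
          gcongr
          exact p.norm_antiderivSeries_succ_le n
      _ ≤ C * r := by gcongr; exact hC n

lemma apply_one_comp_derivSeries_antiderivSeries :
    (ContinuousLinearMap.apply 𝕜 F 1).compFormalMultilinearSeries p.antiderivSeries.derivSeries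
      = p := by
  ext1 n
  rw [← mkPiRing_coeff_eq p, ← mkPiRing_coeff_eq
    ((ContinuousLinearMap.apply 𝕜 F 1).compFormalMultilinearSeries p.antiderivSeries.derivSeries)]
  congr 1
  have h : ((n : 𝕜) + 1) ≠ 0 := by exact_mod_cast n.succ_ne_zero
  change p.antiderivSeries.derivSeries.coeff n 1 = _
  rw [derivSeries_coeff_one, coeff_antiderivSeries_succ, ← Nat.cast_smul_eq_nsmul 𝕜, smul_smul,
    Nat.cast_add_one, mul_inv_cancel₀ h, one_smul]

end FormalMultilinearSeries

theorem AnalyticAt.dslope {𝕜 F : Type*} [NontriviallyNormedField 𝕜] [NormedAddCommGroup F]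
    [NormedSpace 𝕜 F] {f : 𝕜 → F} {a : 𝕜} (hf : AnalyticAt 𝕜 f a) :
    AnalyticAt 𝕜 (dslope f a) a :=
  let ⟨p, hp⟩ := hf
  ⟨p.fslope, hp.has_fpower_series_dslope_fslope⟩

section

variable {𝕜 F : Type*} [RCLike 𝕜] [NormedAddCommGroup F] [NormedSpace 𝕜 F] [CompleteSpace F]

open FormalMultilinearSeries

theorem HasFPowerSeriesOnBall.hasDerivAt_of_antiderivSeries {f g : 𝕜 → F}
    {p : FormalMultilinearSeries 𝕜 𝕜 F} {x : 𝕜} {r : ENNReal}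
    (hf : HasFPowerSeriesOnBall f p x r) (hg : HasFPowerSeriesOnBall g p.antiderivSeries x r)
    {y : 𝕜} (hy : y ∈ Metric.eball x r) : HasDerivAt g (f y) y := by
  have hg' : HasFPowerSeriesOnBall (deriv g) p x r := by
    have := (ContinuousLinearMap.apply 𝕜 F 1).comp_hasFPowerSeriesOnBall hg.fderiv
    rwa [apply_one_comp_derivSeries_antiderivSeries] at this
  rw [hf.unique hg' hy]
  exact (hg.analyticAt_of_mem hy).differentiableAt.hasDerivAt

theorem AnalyticAt.exists_eventually_hasDerivAt {f : 𝕜 → F} {x : 𝕜} (hf : AnalyticAt 𝕜 f x) :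
    ∃ g : 𝕜 → F, AnalyticAt 𝕜 g x ∧ g x = 0 ∧ ∀ᶠ y in nhds x, HasDerivAt g (f y) y := by
  obtain ⟨p, r, hf⟩ := hf
  have hr : r ≤ p.antiderivSeries.radius := hf.r_le.trans p.radius_le_radius_antiderivSeries
  have hg : HasFPowerSeriesOnBall (fun y => p.antiderivSeries.sum (y - x))
      p.antiderivSeries x r := by
    simpa using ((p.antiderivSeries.hasFPowerSeriesOnBall (hf.r_pos.trans_le hr)).mono
      hf.r_pos hr).comp_sub x
  refine ⟨_, hg.analyticAt, ?_, ?_⟩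
  · simpa using (hg.coeff_zero fun _ => 0).symm
  · filter_upwards [Metric.eball_mem_nhds x hf.r_pos] with y hy
    exact hf.hasDerivAt_of_antiderivSeries hg hy

end

theorem HasDerivAt.id_mul_exp {H : ℝ → ℝ} {h x : ℝ} (hH : HasDerivAt H h x) :
    HasDerivAt (fun y => y * Real.exp (H y)) (Real.exp (H x) * (1 + x * h)) x :=
  ((hasDerivAt_id' x).mul hH.exp).congr_deriv (by ring)

theorem analytic_linearization (ψ : ℝ → ℝ)
    (hψ : AnalyticAt ℝ ψ 0) (hψ0 : ψ 0 = 0) (hψ'0 : deriv ψ 0 ≠ 0) :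
    ∃ φ : ℝ → ℝ, AnalyticAt ℝ φ 0 ∧ φ 0 = 0 ∧ deriv φ 0 = 1 ∧
      ∀ᶠ x in nhds (0 : ℝ), deriv φ x * ψ x = φ x * deriv ψ 0 := by
  set u := dslope ψ 0
  set v := dslope u 0
  have hu : AnalyticAt ℝ u 0 := hψ.dslope
  have hu0 : u 0 = deriv ψ 0 := dslope_same ψ 0
  have hu0_ne : u 0 ≠ 0 := hu0 ▸ hψ'0
  have hψu (x : ℝ) : ψ x = x * u x := by simpa [hψ0] using (sub_smul_dslope ψ 0 x).symm
  have huv (x : ℝ) : u x = deriv ψ 0 + x * v x := by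
    have h := sub_smul_dslope u 0 x
    rw [hu0, sub_zero, smul_eq_mul] at h
    linarith
  obtain ⟨H, hHa, hH0, hH⟩ := (hu.dslope.neg.div hu hu0_ne).exists_eventually_hasDerivAt
  have hφ : ∀ᶠ x in nhds (0 : ℝ), HasDerivAt (fun y => y * Real.exp (H y))
      (Real.exp (H x) * (1 + x * (-v x / u x))) x :=
    hH.mono fun x hx => hx.id_mul_exp
  refine ⟨fun y => y * Real.exp (H y), analyticAt_id.mul hHa.rexp, by simp,
    by simp [hφ.self_of_nhds.deriv, hH0], ?_⟩
  filter_upwards [hφ, hu.continuousAt.eventually_ne hu0_ne] with x hx hux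
  have h_lin : (1 + x * (-v x / u x)) * u x = deriv ψ 0 := by
    field_simp
    linarith [huv x]
  rw [hx.deriv, hψu x]
  linear_combination (Real.exp (H x) * x) * h_lin
end
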